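/- Let H = k[X, Y, Z] be the bialgebra with Δ(X) = 1 ⊗ X + X ⊗ 1 + Y ⊗ Z, Δ(Y) = 1 ⊗ Y + Y ⊗ 1, Δ(Z) = 1 ⊗ Z + Z ⊗ 1 (extended multiplicatively). Then the non-cocommutative 5-dimensional rack bialgebra C (with basis 1, x, y, z, t, Δ(x) = 1⊗x + x⊗1 + y⊗z, and rack product x ◁ y = x ◁ z = t, all other products of basis elements of ker ε equal to 0 except c ◁ 1 = c) is a Yetter-Drinfel'd rack over H via the coalgebra morphism q with q(x) = X, q(y) = Y, q(z) = Z, q(t) = 0, and the H-module structure determined by a · q(b) = a ◁ b. -/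

import Mathlib

open TensorProduct

set_option maxHeartbeats 1000000

/-- A rack bialgebra over a field `k`: a counital coaugmented coalgebra
`(C, Δ, ε, 1)` together with a coalgebra morphism `◁ : C ⊗ C → C`
(given here as a bilinear map `lhd`) which is self-distributive and satisfies
`x ◁ 1 = x`, `1 ◁ x = ε(x)·1` and `ε(x ◁ y) = ε(x)ε(y)`. -/
structure RackBialgebra (k C : Type) [Field k] [AddCommGroup C] [Module k C] where
  comul : C →ₗ[k] C ⊗[k] C
  counit : C →ₗ[k] k
  one : C
  lhd : C →ₗ[k] C →ₗ[k] C
  coassoc : (TensorProduct.assoc k C C C).toLinearMap ∘ₗ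
      TensorProduct.map comul LinearMap.id ∘ₗ comul =
    TensorProduct.map LinearMap.id comul ∘ₗ comul
  counit_comul : (TensorProduct.lid k C).toLinearMap ∘ₗ
      TensorProduct.map counit LinearMap.id ∘ₗ comul = LinearMap.id
  comul_counit : (TensorProduct.rid k C).toLinearMap ∘ₗ
      TensorProduct.map LinearMap.id counit ∘ₗ comul = LinearMap.id
  comul_one : comul one = one ⊗ₜ[k] one
  counit_one : counit one = 1
  lhd_one : ∀ a, lhd a one = a
  one_lhd : ∀ a, lhd one a = counit a • one
  counit_lhd : ∀ a b, counit (lhd a b) = counit a * counit b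
  lhd_coalgebra_morphism : comul ∘ₗ TensorProduct.lift lhd =
    TensorProduct.map (TensorProduct.lift lhd) (TensorProduct.lift lhd) ∘ₗ
      (TensorProduct.tensorTensorTensorComm k C C C C).toLinearMap ∘ₗ
      TensorProduct.map comul comul
  self_distrib : TensorProduct.lift lhd ∘ₗ
      TensorProduct.map (TensorProduct.lift lhd) LinearMap.id =
    TensorProduct.lift lhd ∘ₗ
      TensorProduct.map (TensorProduct.lift lhd) (TensorProduct.lift lhd) ∘ₗ
      (TensorProduct.tensorTensorTensorComm k C C C C).toLinearMap ∘ₗ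
      TensorProduct.map LinearMap.id comul

/-- Cocommutativity of the underlying coalgebra of a rack bialgebra. -/
def RackBialgebra.Cocommutative {k C : Type} [Field k] [AddCommGroup C]
    [Module k C] (R : RackBialgebra k C) : Prop :=
  (TensorProduct.comm k C C).toLinearMap ∘ₗ R.comul = R.comul

open TensorProduct

variable (k : Type) [Field k]

/-- The standard basis `1 = e 0, x = e 1, y = e 2, z = e 3, t = e 4` of the
5-dimensional coalgebra `C`. -/
noncomputable def e5 (i : Fin 5) : Fin 5 → k := Pi.basisFun k (Fin 5) i

/-- The coproduct of the 5-dimensional coalgebra: `1` is group-like,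
`y, z, t` are primitive, and `Δ(x) = 1 ⊗ x + x ⊗ 1 + y ⊗ z`. -/
noncomputable def comul5 : (Fin 5 → k) →ₗ[k] (Fin 5 → k) ⊗[k] (Fin 5 → k) :=
  (Pi.basisFun k (Fin 5)).constr k (fun i =>
    match i with
    | 0 => e5 k 0 ⊗ₜ[k] e5 k 0
    | 1 => e5 k 0 ⊗ₜ[k] e5 k 1 + e5 k 1 ⊗ₜ[k] e5 k 0 + e5 k 2 ⊗ₜ[k] e5 k 3
    | 2 => e5 k 0 ⊗ₜ[k] e5 k 2 + e5 k 2 ⊗ₜ[k] e5 k 0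
    | 3 => e5 k 0 ⊗ₜ[k] e5 k 3 + e5 k 3 ⊗ₜ[k] e5 k 0
    | 4 => e5 k 0 ⊗ₜ[k] e5 k 4 + e5 k 4 ⊗ₜ[k] e5 k 0)

/-- The counit of the 5-dimensional coalgebra: the coefficient of `1`. -/
def counit5 : (Fin 5 → k) →ₗ[k] k := LinearMap.proj 0

/-- The rack product of the non-cocommutative 5-dimensional rack bialgebra:
`x ◁ y = x ◁ z = t`, all other products of basis elements of `ker ε` vanish,
`c ◁ 1 = c` and `1 ◁ c = ε(c)·1`. -/
noncomputable def lhd5 : (Fin 5 → k) →ₗ[k] (Fin 5 → k) →ₗ[k] (Fin 5 → k) :=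
  (Pi.basisFun k (Fin 5)).constr k (fun i =>
    match i with
    | 0 => LinearMap.toSpanSingleton k (Fin 5 → k) (e5 k 0) ∘ₗ counit5 k
    | 1 => (Pi.basisFun k (Fin 5)).constr k (fun j =>
        match j with
        | 0 => e5 k 1 | 1 => 0 | 2 => e5 k 4 | 3 => e5 k 4 | 4 => 0)
    | 2 => (Pi.basisFun k (Fin 5)).constr k (fun j =>
        match j with | 0 => e5 k 2 | _ => 0)
    | 3 => (Pi.basisFun k (Fin 5)).constr k (fun j =>
        match j with | 0 => e5 k 3 | _ => 0)
    | 4 => (Pi.basisFun k (Fin 5)).constr k (fun j =>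
        match j with | 0 => e5 k 4 | _ => 0))

/-- The coproduct of the bialgebra `H = k[X, Y, Z]` with
`Δ(X) = 1 ⊗ X + X ⊗ 1 + Y ⊗ Z` and `Y, Z` primitive. -/
noncomputable def comulH : MvPolynomial (Fin 3) k →ₐ[k]
    MvPolynomial (Fin 3) k ⊗[k] MvPolynomial (Fin 3) k :=
  MvPolynomial.aeval (fun i =>
    match i with
    | 0 => (1 : MvPolynomial (Fin 3) k) ⊗ₜ[k] MvPolynomial.X 0 +
        MvPolynomial.X 0 ⊗ₜ[k] (1 : MvPolynomial (Fin 3) k) +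
        MvPolynomial.X 1 ⊗ₜ[k] MvPolynomial.X 2
    | 1 => (1 : MvPolynomial (Fin 3) k) ⊗ₜ[k] MvPolynomial.X 1 +
        MvPolynomial.X 1 ⊗ₜ[k] (1 : MvPolynomial (Fin 3) k)
    | 2 => (1 : MvPolynomial (Fin 3) k) ⊗ₜ[k] MvPolynomial.X 2 +
        MvPolynomial.X 2 ⊗ₜ[k] (1 : MvPolynomial (Fin 3) k))

/-- The counit of the bialgebra `H = k[X, Y, Z]`. -/
noncomputable def counitH : MvPolynomial (Fin 3) k →ₐ[k] k :=
  MvPolynomial.aeval (fun _ => 0)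

/-- The coalgebra morphism `q : C → H`, with `q(1) = 1`, `q(x) = X`,
`q(y) = Y`, `q(z) = Z`, `q(t) = 0`. -/
noncomputable def q17 : (Fin 5 → k) →ₗ[k] MvPolynomial (Fin 3) k :=
  (Pi.basisFun k (Fin 5)).constr k (fun i =>
    match i with
    | 0 => 1
    | 1 => MvPolynomial.X 0
    | 2 => MvPolynomial.X 1
    | 3 => MvPolynomial.X 2
    | 4 => 0)

/-!
Since `- ◁ x = 0` and `- ◁ y = - ◁ z = E`, where `E` sends `x` to `t` and kills the other basis
vectors, and `E ∘ E = 0`, the action of `H` factors through the dual numbers: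
`X ↦ 0`, `Y, Z ↦ ε`, `ε ↦ E`. Thus `c · h = ε(h) c + β(h) E(c)` for a linear form `β`. As `E` is a
coderivation of `C` with `(E ⊗ E) ∘ Δ = 0`, this is a module coalgebra structure, and as
`q ∘ E = 0` we get `q(c · h) = ε(h) q(c)`, which gives `h₁ q(c · h₂) = q(c) h` in the commutative
algebra `H`.
-/

section DualNumberAction

variable {R M : Type*} [CommSemiring R] [AddCommMonoid M] [Module R M]

noncomputable def dualNumberAction {H : Type*} [Semiring H] [Algebra R H]
    (ρ : H →ₐ[R] DualNumber R) (E : Module.End R M) (hE : E * E = 0) :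
    H →ₐ[R] Module.End R M :=
  (DualNumber.lift ⟨(Algebra.ofId R _, E), hE, (Algebra.commute_algebraMap_right · E)⟩).comp ρ

theorem dualNumberAction_apply {H : Type*} [Semiring H] [Algebra R H]
    (ρ : H →ₐ[R] DualNumber R) (E : Module.End R M) (hE : E * E = 0) (h : H) (m : M) :
    dualNumberAction ρ E hE h m = (ρ h).fst • m + (ρ h).snd • E m := by
  simp [dualNumberAction, DualNumber.lift_apply_apply]

end DualNumberAction

section ModuleCoalgebra

variable {R C H : Type*} [CommSemiring R] [AddCommMonoid C] [Module R C]
  [AddCommMonoid H] [Module R H]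

theorem mul'_map_counit_left {ΔH : H →ₗ[R] H ⊗[R] H} {εH : H →ₗ[R] R}
    (hl : (TensorProduct.lid R H).toLinearMap ∘ₗ map εH LinearMap.id ∘ₗ ΔH = LinearMap.id)
    (g : H →ₗ[R] R) (h : H) : LinearMap.mul' R R (map εH g (ΔH h)) = g h := by
  have : LinearMap.mul' R R ∘ₗ map εH g =
      g ∘ₗ (TensorProduct.lid R H).toLinearMap ∘ₗ map εH LinearMap.id :=
    TensorProduct.ext' fun a b => by simp
  simpa using congr($this (ΔH h)).trans congr(g ($hl h))

theorem mul'_map_counit_right {ΔH : H →ₗ[R] H ⊗[R] H} {εH : H →ₗ[R] R}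
    (hr : (TensorProduct.rid R H).toLinearMap ∘ₗ map LinearMap.id εH ∘ₗ ΔH = LinearMap.id)
    (g : H →ₗ[R] R) (h : H) : LinearMap.mul' R R (map g εH (ΔH h)) = g h := by
  have : LinearMap.mul' R R ∘ₗ map g εH =
      g ∘ₗ (TensorProduct.rid R H).toLinearMap ∘ₗ map LinearMap.id εH :=
    TensorProduct.ext' fun a b => by simp [mul_comm]
  simpa using congr($this (ΔH h)).trans congr(g ($hr h))

variable (εH β : H →ₗ[R] R) (E : Module.End R C) (Φ : H →ₗ[R] Module.End R C)

theorem map_lift_flip_tensorTensorTensorComm (hΦ : ∀ h c, Φ h c = εH h • c + β h • E c)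
    (u : C ⊗[R] C) (v : H ⊗[R] H) :
    map (TensorProduct.lift Φ.flip) (TensorProduct.lift Φ.flip)
        (tensorTensorTensorComm R C C H H (u ⊗ₜ v)) =
      LinearMap.mul' R R (map εH εH v) • u +
        LinearMap.mul' R R (map εH β v) • map LinearMap.id E u +
        LinearMap.mul' R R (map β εH v) • map E LinearMap.id u +
        LinearMap.mul' R R (map β β v) • map E E u := by
  induction u with
  | zero => simp
  | add x y hx hy => simp only [add_tmul, map_add, hx, hy, smul_add]; abel
  | tmul c₁ c₂ =>
    induction v with
    | zero => simp
    | add x y hx hy => simp only [tmul_add, map_add, hx, hy, add_smul]; abel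
    | tmul h₁ h₂ =>
      simp only [tensorTensorTensorComm_tmul, map_tmul, TensorProduct.lift.tmul,
        LinearMap.flip_apply, hΦ, LinearMap.mul'_apply, LinearMap.id_coe, id_eq, tmul_add,
        add_tmul, TensorProduct.tmul_smul, ← TensorProduct.smul_tmul']
      module

/-- In `Δ(c · h) = (c₁ · h₁) ⊗ (c₂ · h₂)` the term `β(h₁) β(h₂)` is killed by `(E ⊗ E) ∘ Δ = 0`,
and the counit laws turn `ε(h₁) β(h₂)` and `β(h₁) ε(h₂)` into `β(h)`; so any linear `β` works. -/
theorem comul_comp_lift_flip_eq {ΔC : C →ₗ[R] C ⊗[R] C} {ΔH : H →ₗ[R] H ⊗[R] H}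
    (hl : (TensorProduct.lid R H).toLinearMap ∘ₗ map εH LinearMap.id ∘ₗ ΔH = LinearMap.id)
    (hr : (TensorProduct.rid R H).toLinearMap ∘ₗ map LinearMap.id εH ∘ₗ ΔH = LinearMap.id)
    (hE : ΔC ∘ₗ E = map LinearMap.id E ∘ₗ ΔC + map E LinearMap.id ∘ₗ ΔC)
    (hEE : map E E ∘ₗ ΔC = 0) (hΦ : ∀ h c, Φ h c = εH h • c + β h • E c) :
    ΔC ∘ₗ TensorProduct.lift Φ.flip =
      map (TensorProduct.lift Φ.flip) (TensorProduct.lift Φ.flip) ∘ₗ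
        (tensorTensorTensorComm R C C H H).toLinearMap ∘ₗ map ΔC ΔH := by
  refine TensorProduct.ext' fun c h => ?_
  have hE' := congr($hE c)
  have hEE' := congr($hEE c)
  simp only [LinearMap.comp_apply, LinearEquiv.coe_coe, map_tmul, TensorProduct.lift.tmul,
    LinearMap.flip_apply, LinearMap.add_apply, LinearMap.zero_apply] at hE' hEE' ⊢
  rw [map_lift_flip_tensorTensorTensorComm εH β E Φ hΦ, mul'_map_counit_left hl,
    mul'_map_counit_left hl, mul'_map_counit_right hr, hEE', hΦ, map_add, map_smul,
    map_smul, hE', smul_zero, add_zero, smul_add, add_assoc]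

end ModuleCoalgebra

theorem mul'_comp_map_lift_eq_of_counit {R A C : Type*} [CommSemiring R] [CommSemiring A]
    [Algebra R A] [AddCommMonoid C] [Module R C] {ΔA : A →ₗ[R] A ⊗[R] A} {εA : A →ₗ[R] R}
    (hr : (TensorProduct.rid R A).toLinearMap ∘ₗ map LinearMap.id εA ∘ₗ ΔA = LinearMap.id)
    (q : C →ₗ[R] A) (act : C →ₗ[R] A →ₗ[R] C) (hq : ∀ c h, q (act c h) = εA h • q c) :
    LinearMap.mul' R A ∘ₗ map LinearMap.id (q ∘ₗ TensorProduct.lift act) ∘ₗ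
        (TensorProduct.leftComm R C A A).toLinearMap ∘ₗ map LinearMap.id ΔA =
      LinearMap.mul' R A ∘ₗ map q LinearMap.id := by
  refine TensorProduct.ext' fun c h => ?_
  have key : ∀ v : A ⊗[R] A,
      LinearMap.mul' R A (map LinearMap.id (q ∘ₗ TensorProduct.lift act)
        (TensorProduct.leftComm R C A A (c ⊗ₜ v))) =
      TensorProduct.rid R A (map LinearMap.id εA v) * q c := by
    intro v
    induction v with
    | zero => simp
    | add x y hx hy => simp only [tmul_add, map_add, hx, hy, add_mul]
    | tmul h₁ h₂ => simp [hq]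
  simp only [LinearMap.comp_apply, LinearEquiv.coe_coe, map_tmul, LinearMap.id_coe, id_eq, key]
  have hrh : TensorProduct.rid R A (map LinearMap.id εA (ΔA h)) = h := congr($hr h)
  rw [hrh, LinearMap.mul'_apply, mul_comm]

section FiveDimensional

local notation "H" => MvPolynomial (Fin 3) k

theorem comulH_coassoc :
    (TensorProduct.assoc k H H H).toLinearMap ∘ₗ
        map (comulH k).toLinearMap LinearMap.id ∘ₗ (comulH k).toLinearMap =
      map LinearMap.id (comulH k).toLinearMap ∘ₗ (comulH k).toLinearMap := by
  have h : (Algebra.TensorProduct.assoc k k k H H H).toAlgHom.comp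
        ((Algebra.TensorProduct.map (comulH k) (.id k H)).comp (comulH k)) =
      (Algebra.TensorProduct.map (.id k H) (comulH k)).comp (comulH k) := by
    refine MvPolynomial.algHom_ext fun i => ?_
    fin_cases i <;> simp [comulH, tmul_add, add_tmul, Algebra.TensorProduct.one_def] <;> abel
  exact congr(($h).toLinearMap)

theorem counitH_comulH_left :
    (TensorProduct.lid k H).toLinearMap ∘ₗ
        map (counitH k).toLinearMap LinearMap.id ∘ₗ (comulH k).toLinearMap = LinearMap.id := by
  have h : ((Algebra.TensorProduct.lid k H).toAlgHom.comp
        (Algebra.TensorProduct.map (counitH k) (.id k H))).comp (comulH k) = .id k H := by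
    refine MvPolynomial.algHom_ext fun i => ?_
    fin_cases i <;> simp [comulH, counitH]
  exact congr(($h).toLinearMap)

theorem counitH_comulH_right :
    (TensorProduct.rid k H).toLinearMap ∘ₗ
        map LinearMap.id (counitH k).toLinearMap ∘ₗ (comulH k).toLinearMap = LinearMap.id := by
  have h : ((Algebra.TensorProduct.rid k k H).toAlgHom.comp
        (Algebra.TensorProduct.map (.id k H) (counitH k))).comp (comulH k) = .id k H := by
    refine MvPolynomial.algHom_ext fun i => ?_
    fin_cases i <;> simp [comulH, counitH]
  exact congr(($h).toLinearMap)

theorem ext_e5 {N : Type*} [AddCommMonoid N] [Module k N] {f g : (Fin 5 → k) →ₗ[k] N}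
    (h : ∀ i, f (e5 k i) = g (e5 k i)) : f = g :=
  (Pi.basisFun k (Fin 5)).ext h

theorem q17_comp_comul5 :
    (comulH k).toLinearMap ∘ₗ q17 k = map (q17 k) (q17 k) ∘ₗ comul5 k := by
  refine ext_e5 k fun i => ?_
  fin_cases i <;>
    simp [e5, q17, comul5, comulH, Algebra.TensorProduct.one_def]

theorem counitH_comp_q17 : (counitH k).toLinearMap ∘ₗ q17 k = counit5 k := by
  refine ext_e5 k fun i => ?_
  fin_cases i <;> simp [e5, q17, counitH, counit5]

/-- The operator `- ◁ y = - ◁ z` on `C`. -/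
noncomputable def xToT : Module.End k (Fin 5 → k) :=
  LinearMap.toSpanSingleton k (Fin 5 → k) (e5 k 4) ∘ₗ LinearMap.proj 1

theorem xToT_apply (c : Fin 5 → k) : xToT k c = c 1 • e5 k 4 := rfl

theorem xToT_mul_self : xToT k * xToT k = 0 := by
  refine LinearMap.ext fun c => ?_
  simp [xToT_apply, e5]

theorem comul5_comp_xToT : comul5 k ∘ₗ xToT k =
    map LinearMap.id (xToT k) ∘ₗ comul5 k + map (xToT k) LinearMap.id ∘ₗ comul5 k := by
  refine ext_e5 k fun i => ?_
  fin_cases i <;> simp [xToT_apply, e5, comul5]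

theorem map_xToT_xToT_comp_comul5 : map (xToT k) (xToT k) ∘ₗ comul5 k = 0 := by
  refine ext_e5 k fun i => ?_
  fin_cases i <;> simp [xToT_apply, e5, comul5]

noncomputable def toDualNumber : H →ₐ[k] DualNumber k :=
  MvPolynomial.aeval (fun i => match i with
    | 0 => 0 | 1 => DualNumber.eps | 2 => DualNumber.eps)

theorem fst_toDualNumber (h : H) : (toDualNumber k h).fst = counitH k h := by
  have : (TrivSqZeroExt.fstHom k k k).comp (toDualNumber k) = counitH k := by
    refine MvPolynomial.algHom_ext fun i => ?_
    fin_cases i <;> simp [toDualNumber, counitH]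
  exact congr($this h)

theorem counit5_xToT (c : Fin 5 → k) : counit5 k (xToT k c) = 0 := by
  simp [xToT_apply, counit5, e5]

theorem q17_xToT (c : Fin 5 → k) : q17 k (xToT k c) = 0 := by
  simp [xToT_apply, q17, e5]

noncomputable def actH : H →ₐ[k] Module.End k (Fin 5 → k) :=
  dualNumberAction (toDualNumber k) (xToT k) (xToT_mul_self k)

theorem actH_apply (h : H) (c : Fin 5 → k) :
    actH k h c = counitH k h • c + (toDualNumber k h).snd • xToT k c := by
  rw [actH, dualNumberAction_apply, fst_toDualNumber]

theorem actH_q17 (a b : Fin 5 → k) : actH k (q17 k b) a = lhd5 k a b := by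
  have : (actH k).toLinearMap ∘ₗ q17 k = (lhd5 k).flip := by
    refine ext_e5 k fun j => ext_e5 k fun i => ?_
    fin_cases j <;> fin_cases i <;>
      simp [actH_apply, xToT_apply, q17, lhd5, e5, toDualNumber, counitH, counit5]
  exact congr($this b a)

end FiveDimensional

/-- the 5-dimensional non-cocommutative rack bialgebra `C` is a
Yetter-Drinfel'd rack over the bialgebra `H = k[X, Y, Z]` with
`Δ(X) = 1 ⊗ X + X ⊗ 1 + Y ⊗ Z`, via the coalgebra morphism `q` with
`q(x) = X`, `q(y) = Y`, `q(z) = Z`, `q(t) = 0`, and the `H`-module structure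
determined by `a · q(b) = a ◁ b`. -/
theorem five_dimensional_yd_rack :
    -- `Δ_H` is coassociative with counit `ε_H`, so `H` is a bialgebra
    ((TensorProduct.assoc k (MvPolynomial (Fin 3) k) (MvPolynomial (Fin 3) k)
        (MvPolynomial (Fin 3) k)).toLinearMap ∘ₗ
        TensorProduct.map (comulH k).toLinearMap LinearMap.id ∘ₗ
        (comulH k).toLinearMap =
      TensorProduct.map LinearMap.id (comulH k).toLinearMap ∘ₗ
        (comulH k).toLinearMap) ∧
    ((TensorProduct.lid k (MvPolynomial (Fin 3) k)).toLinearMap ∘ₗ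
        TensorProduct.map (counitH k).toLinearMap LinearMap.id ∘ₗ
        (comulH k).toLinearMap = LinearMap.id) ∧
    ((TensorProduct.rid k (MvPolynomial (Fin 3) k)).toLinearMap ∘ₗ
        TensorProduct.map LinearMap.id (counitH k).toLinearMap ∘ₗ
        (comulH k).toLinearMap = LinearMap.id) ∧
    -- `q` is a morphism of counital coaugmented coalgebras
    ((comulH k).toLinearMap ∘ₗ q17 k =
      TensorProduct.map (q17 k) (q17 k) ∘ₗ comul5 k) ∧
    ((counitH k).toLinearMap ∘ₗ q17 k = counit5 k) ∧
    (q17 k (e5 k 0) = 1) ∧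
    -- the right `H`-module coalgebra structure with `a · q(b) = a ◁ b`
    ∃ act : (Fin 5 → k) →ₗ[k] MvPolynomial (Fin 3) k →ₗ[k] (Fin 5 → k),
      (∀ c, act c (1 : MvPolynomial (Fin 3) k) = c) ∧
      (∀ c (g h : MvPolynomial (Fin 3) k), act (act c g) h = act c (g * h)) ∧
      -- condition (c): `a · q(b) = a ◁ b`
      (∀ a b : Fin 5 → k, act a (q17 k b) = lhd5 k a b) ∧
      -- `C` is an `H`-module coalgebra
      (comul5 k ∘ₗ TensorProduct.lift act =
        TensorProduct.map (TensorProduct.lift act) (TensorProduct.lift act) ∘ₗ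
          (TensorProduct.tensorTensorTensorComm k (Fin 5 → k) (Fin 5 → k)
            (MvPolynomial (Fin 3) k) (MvPolynomial (Fin 3) k)).toLinearMap ∘ₗ
          TensorProduct.map (comul5 k) (comulH k).toLinearMap) ∧
      (∀ (c : Fin 5 → k) (h : MvPolynomial (Fin 3) k),
        counit5 k (act c h) = counit5 k c * counitH k h) ∧
      -- condition (d): `h₁ q(a · h₂) = q(a) h`
      (LinearMap.mul' k (MvPolynomial (Fin 3) k) ∘ₗ
          TensorProduct.map LinearMap.id (q17 k ∘ₗ TensorProduct.lift act) ∘ₗ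
          (TensorProduct.leftComm k (Fin 5 → k) (MvPolynomial (Fin 3) k)
            (MvPolynomial (Fin 3) k)).toLinearMap ∘ₗ
          TensorProduct.map LinearMap.id (comulH k).toLinearMap =
        LinearMap.mul' k (MvPolynomial (Fin 3) k) ∘ₗ
          TensorProduct.map (q17 k) LinearMap.id) := by
  refine ⟨comulH_coassoc k, counitH_comulH_left k, counitH_comulH_right k, q17_comp_comul5 k,
    counitH_comp_q17 k, by simp [q17, e5], (actH k).toLinearMap.flip, fun c => by simp,
    fun c g h => ?_, fun a b => actH_q17 k a b, ?_, fun c h => ?_, ?_⟩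
  · change actH k h (actH k g c) = actH k (g * h) c
    rw [mul_comm, map_mul, Module.End.mul_apply]
  · exact comul_comp_lift_flip_eq _ (TrivSqZeroExt.sndHom k k ∘ₗ (toDualNumber k).toLinearMap)
      _ _ (counitH_comulH_left k) (counitH_comulH_right k) (comul5_comp_xToT k)
      (map_xToT_xToT_comp_comul5 k) (actH_apply k)
  · simp [actH_apply, counit5_xToT, mul_comm]
  · exact mul'_comp_map_lift_eq_of_counit (counitH_comulH_right k) _ _ fun c h => by
      simp [actH_apply, q17_xToT]
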